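/- arXiv:1306.1066 — 7 statements merged into one kernel-verified Lean document; each statement's English description precedes it below -/
import Mathlib

section
/- Let Θ be a measurable parameter space with prior probability measure β, X a set with pseudo-metric ρ, and for each θ ∈ Θ a density p_θ : X → ℝ≥0. Suppose that for some c > 0, β({θ : d(p_θ(x), p_θ(y)) ≤ L·ρ(x,y) for all x, y ∈ X}) ≥ 1 − e^{−cL} for all L ≥ 0 (where d is the absolute log-ratio distance). Fix n ∈ ℕ and define the product density p_θ^n(x_1,…,x_n) = Π_{i=1}^n p_θ(x_i) on X^n and the pseudo-metric ρ^n((x_i),(y_i)) = Σ_{i=1}^n ρ(x_i, y_i). Then β({θ : d(p_θ^n(x), p_θ^n(y)) ≤ L·ρ^n(x,y) for all x, y ∈ X^n}) ≥ 1 − e^{−(c/n)L} for all L ≥ 0; i.e., the product family satisfies the same concentration assumption with constant c/n under ρ^n. -/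
/-! Since `lrdist a b = 0` whenever `a` or `b` is zero (`a / 0 = 0` and `log 0 = 0`), the
log-ratio distance of two products is at most the sum of the factorwise distances (the logarithm
turns products into sums). So every parameter for which `p_θ` is `L`-Lipschitz also gives an
`L`-Lipschitz product density for `ρ^n`, and the claim follows from `e^{-cL} ≤ e^{-(c/n)L}`. -/

open MeasureTheory

/-- The absolute log-ratio distance on `ℝ≥0` (represented as nonnegative reals). -/
noncomputable def lrdist (a b : ℝ) : ℝ :=
  if a = 0 ∧ b = 0 then 0 else |Real.log (a / b)|

lemma lrdist_nonneg (a b : ℝ) : 0 ≤ lrdist a b := by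
  unfold lrdist; split <;> positivity

lemma lrdist_zero_left (b : ℝ) : lrdist 0 b = 0 := by
  unfold lrdist; split <;> simp

lemma lrdist_zero_right (a : ℝ) : lrdist a 0 = 0 := by
  unfold lrdist; split <;> simp

lemma lrdist_eq_abs_log_sub {a b : ℝ} (ha : a ≠ 0) (hb : b ≠ 0) :
    lrdist a b = |Real.log a - Real.log b| := by
  rw [lrdist, if_neg (fun h => ha h.1), Real.log_div ha hb]

lemma lrdist_prod_le_sum {ι : Type*} (s : Finset ι) (a b : ι → ℝ) :
    lrdist (∏ i ∈ s, a i) (∏ i ∈ s, b i) ≤ ∑ i ∈ s, lrdist (a i) (b i) := by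
  have hsum_nonneg : 0 ≤ ∑ i ∈ s, lrdist (a i) (b i) :=
    Finset.sum_nonneg fun i _ => lrdist_nonneg _ _
  by_cases ha : ∃ i ∈ s, a i = 0
  · rwa [Finset.prod_eq_zero_iff.mpr ha, lrdist_zero_left]
  by_cases hb : ∃ i ∈ s, b i = 0
  · rwa [Finset.prod_eq_zero_iff.mpr hb, lrdist_zero_right]
  push Not at ha hb
  calc lrdist (∏ i ∈ s, a i) (∏ i ∈ s, b i)
      = |∑ i ∈ s, (Real.log (a i) - Real.log (b i))| := by
        rw [lrdist_eq_abs_log_sub (Finset.prod_ne_zero_iff.mpr ha)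
            (Finset.prod_ne_zero_iff.mpr hb), Real.log_prod ha, Real.log_prod hb,
          Finset.sum_sub_distrib]
    _ ≤ ∑ i ∈ s, |Real.log (a i) - Real.log (b i)| := Finset.abs_sum_le_sum_abs _ _
    _ = ∑ i ∈ s, lrdist (a i) (b i) :=
        Finset.sum_congr rfl fun i hi => (lrdist_eq_abs_log_sub (ha i hi) (hb i hi)).symm

lemma lrdist_prod_le_mul_sum_dist {ι X : Type*} [PseudoMetricSpace X] (s : Finset ι)
    {f : X → ℝ} {L : ℝ} (hf : ∀ x y, lrdist (f x) (f y) ≤ L * dist x y) (x y : ι → X) :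
    lrdist (∏ i ∈ s, f (x i)) (∏ i ∈ s, f (y i)) ≤ L * ∑ i ∈ s, dist (x i) (y i) :=
  calc lrdist (∏ i ∈ s, f (x i)) (∏ i ∈ s, f (y i))
      ≤ ∑ i ∈ s, lrdist (f (x i)) (f (y i)) := lrdist_prod_le_sum s _ _
    _ ≤ ∑ i ∈ s, L * dist (x i) (y i) := Finset.sum_le_sum fun i _ => hf (x i) (y i)
    _ = L * ∑ i ∈ s, dist (x i) (y i) := (Finset.mul_sum _ _ _).symm

lemma div_natCast_le_self {c : ℝ} (hc : 0 ≤ c) (n : ℕ) : c / n ≤ c := by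
  rcases n.eq_zero_or_pos with rfl | hn
  · simpa using hc
  · exact div_le_self hc (Nat.one_le_cast.mpr hn)

theorem product_density_concentration_general
    {Θ X : Type*} [MeasurableSpace Θ] [PseudoMetricSpace X]
    (β : Measure Θ)
    (p : Θ → X → ℝ)
    (c : ℝ) (hc : 0 < c)
    (hconc : ∀ L : ℝ, 0 ≤ L →
      ENNReal.ofReal (1 - Real.exp (-(c * L))) ≤
        β {θ : Θ | ∀ x y : X, lrdist (p θ x) (p θ y) ≤ L * dist x y})
    (n : ℕ) :
    ∀ L : ℝ, 0 ≤ L →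
      ENNReal.ofReal (1 - Real.exp (-(c / n * L))) ≤
        β {θ : Θ | ∀ x y : Fin n → X,
          lrdist (∏ i, p θ (x i)) (∏ i, p θ (y i)) ≤ L * ∑ i, dist (x i) (y i)} := by
  intro L hL
  have hlipschitz_subset :
      {θ : Θ | ∀ x y : X, lrdist (p θ x) (p θ y) ≤ L * dist x y} ⊆
        {θ : Θ | ∀ x y : Fin n → X,
          lrdist (∏ i, p θ (x i)) (∏ i, p θ (y i)) ≤ L * ∑ i, dist (x i) (y i)} :=
    fun θ hθ x y => lrdist_prod_le_mul_sum_dist Finset.univ hθ x y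
  have hexp : Real.exp (-(c * L)) ≤ Real.exp (-(c / n * L)) := by
    gcongr
    exact div_natCast_le_self hc.le n
  calc ENNReal.ofReal (1 - Real.exp (-(c / n * L)))
      ≤ ENNReal.ofReal (1 - Real.exp (-(c * L))) := ENNReal.ofReal_le_ofReal (by linarith)
    _ ≤ _ := (hconc L hL).trans (measure_mono hlipschitz_subset)

/-- if the prior `β` satisfies Assumption 2 with constant `c` for the
single-observation family (the prior mass of the set of `L`-Lipschitz parameters is at
least `1 - e^{-cL}` for all `L ≥ 0`), then the product family
`p_θ^n(x) = Π_i p_θ(x_i)` satisfies Assumption 2 with constant `c/n` with respect to the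
pseudo-metric `ρ^n(x,y) = Σ_i ρ(x_i,y_i)`. -/
theorem product_density_concentration
    {Θ X : Type*} [MeasurableSpace Θ] [PseudoMetricSpace X]
    (β : Measure Θ) [IsProbabilityMeasure β]
    (p : Θ → X → ℝ)
    (hp_nonneg : ∀ θ x, 0 ≤ p θ x)
    (c : ℝ) (hc : 0 < c)
    (hconc : ∀ L : ℝ, 0 ≤ L →
      ENNReal.ofReal (1 - Real.exp (-(c * L))) ≤
        β {θ : Θ | ∀ x y : X, lrdist (p θ x) (p θ y) ≤ L * dist x y})
    (n : ℕ) :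
    ∀ L : ℝ, 0 ≤ L →
      ENNReal.ofReal (1 - Real.exp (-(c / n * L))) ≤
        β {θ : Θ | ∀ x y : Fin n → X,
          lrdist (∏ i, p θ (x i)) (∏ i, p θ (y i)) ≤ L * ∑ i, dist (x i) (y i)} :=
  product_density_concentration_general β p c hc hconc n
end

section
/- For the exponential likelihood family p_θ(x) = θ·e^{−θx} on x ∈ ℝ≥0 with parameter θ > 0: (i) the absolute log-ratio distance satisfies d(p_θ(x), p_θ(y)) = θ·|x − y| for all x, y ≥ 0; (ii) consequently, for every L > 0 the set Θ_L = {θ > 0 : d(p_θ(x), p_θ(y)) ≤ L·|x − y| for all x, y ≥ 0} contains (0, L], and under the exponential prior θ ∼ Exp(λ) with density λe^{−λθ} on θ > 0, β(Θ_L) ≥ 1 − e^{−λL} for all L ≥ 0; i.e., Assumption 2 holds with c = λ and metric ρ(x,y) = |x − y|. -/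
/-!
The log-likelihood ratio `log (p_θ(x) / p_θ(y)) = θ (y - x)` is linear, so `p_θ` is exactly
`θ`-Lipschitz for `d` and every `θ ∈ (0, L]` lies in `Θ_L`. The prior `Exp(λ)` is Mathlib's
`expMeasure λ` (the densities agree off `θ = 0`), whose CDF gives `(0, L]` mass `1 - e^{-λL}`.
-/

open MeasureTheory

/-- The exponential likelihood density `p_θ(x) = θ·e^{−θx}` on `x ≥ 0`. -/
noncomputable def expDensity (θ x : ℝ) : ℝ := θ * Real.exp (-(θ * x))

/-- The exponential prior `Exp(λ)`: density `λ·e^{−λθ}` on `θ > 0`. -/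
noncomputable def expPrior (lam : ℝ) : Measure ℝ :=
  volume.withDensity fun θ =>
    if 0 < θ then ENNReal.ofReal (lam * Real.exp (-(lam * θ))) else 0

open ProbabilityTheory Set

/-- The set `Θ_L` of the paper. -/
def lipschitzParams (L : ℝ) : Set ℝ :=
  {θ | 0 < θ ∧ ∀ x y : ℝ, 0 ≤ x → 0 ≤ y →
    lrdist (expDensity θ x) (expDensity θ y) ≤ L * |x - y|}

lemma lrdist_expDensity {θ : ℝ} (hθ : 0 < θ) (x y : ℝ) :
    lrdist (expDensity θ x) (expDensity θ y) = θ * |x - y| := by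
  have hpos : 0 < expDensity θ x := mul_pos hθ (Real.exp_pos _)
  rw [lrdist, if_neg fun h => hpos.ne' h.1, expDensity, expDensity,
    mul_div_mul_left _ _ hθ.ne', ← Real.exp_sub, Real.log_exp,
    show -(θ * x) - -(θ * y) = θ * (y - x) by ring, abs_mul, abs_of_pos hθ, abs_sub_comm]

lemma Ioc_subset_lipschitzParams (L : ℝ) : Ioc 0 L ⊆ lipschitzParams L := by
  rintro θ ⟨hθ, hθL⟩
  refine ⟨hθ, fun x y _ _ => ?_⟩
  rw [lrdist_expDensity hθ]
  exact mul_le_mul_of_nonneg_right hθL (abs_nonneg _)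

lemma expPrior_eq_expMeasure (lam : ℝ) : expPrior lam = expMeasure lam := by
  change _ = volume.withDensity (exponentialPDF lam)
  refine withDensity_congr_ae ?_
  filter_upwards [Measure.ae_ne volume (0 : ℝ)] with θ hθ
  rcases hθ.lt_or_gt with hneg | hpos
  · rw [if_neg hneg.not_gt, exponentialPDF_of_neg hneg]
  · rw [if_pos hpos, exponentialPDF_of_nonneg hpos.le]

lemma expMeasure_Ioc_zero {r L : ℝ} (hr : 0 < r) (hL : 0 ≤ L) :
    expMeasure r (Ioc 0 L) = ENNReal.ofReal (1 - Real.exp (-(r * L))) := by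
  have := isProbabilityMeasure_expMeasure hr
  rw [← measure_cdf (expMeasure r), StieltjesFunction.measure_Ioc, cdf_expMeasure_eq hr,
    cdf_expMeasure_eq hr, if_pos hL, if_pos le_rfl, mul_zero, neg_zero, Real.exp_zero, sub_self, sub_zero]

/-- for the exponential family `p_θ(x) = θe^{−θx}` with `θ > 0`:
(i) `d(p_θ(x), p_θ(y)) = θ·|x − y|` for all `x, y ≥ 0`; (ii) for every `L > 0` the set
`Θ_L` of `L`-Lipschitz parameters contains `(0, L]`, and under the exponential prior
`θ ∼ Exp(λ)` one has `β(Θ_L) ≥ 1 − e^{−λL}` for all `L ≥ 0`: Assumption 2 holds with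
`c = λ` and metric `ρ(x,y) = |x − y|`. -/
theorem exponential_conjugate_prior_assumption2 (lam : ℝ) (hlam : 0 < lam) :
    (∀ θ : ℝ, 0 < θ → ∀ x y : ℝ, 0 ≤ x → 0 ≤ y →
      lrdist (expDensity θ x) (expDensity θ y) = θ * |x - y|) ∧
    (∀ L : ℝ, 0 < L →
      Set.Ioc (0 : ℝ) L ⊆
        {θ : ℝ | 0 < θ ∧ ∀ x y : ℝ, 0 ≤ x → 0 ≤ y →
          lrdist (expDensity θ x) (expDensity θ y) ≤ L * |x - y|}) ∧
    (∀ L : ℝ, 0 ≤ L →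
      ENNReal.ofReal (1 - Real.exp (-(lam * L))) ≤
        expPrior lam
          {θ : ℝ | 0 < θ ∧ ∀ x y : ℝ, 0 ≤ x → 0 ≤ y →
            lrdist (expDensity θ x) (expDensity θ y) ≤ L * |x - y|}) := by
  refine ⟨fun θ hθ x y _ _ => lrdist_expDensity hθ x y,
    fun L _ => Ioc_subset_lipschitzParams L, fun L hL => ?_⟩
  calc ENNReal.ofReal (1 - Real.exp (-(lam * L)))
      = expPrior lam (Ioc 0 L) := by rw [expPrior_eq_expMeasure, expMeasure_Ioc_zero hlam hL]
    _ ≤ expPrior lam (lipschitzParams L) := measure_mono (Ioc_subset_lipschitzParams L)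
end

section
/- For any n ≥ 1 and any integers 0 ≤ k₂ < k₁ ≤ n, the slope of the chord of the function k ↦ ln C(n,k) (where C(n,k) is the binomial coefficient) satisfies −ln n ≤ (ln C(n,k₁) − ln C(n,k₂))/(k₁ − k₂) ≤ ln n; consequently, for the binomial likelihood p_{θ,n}(k) = C(n,k)·θ^k·(1−θ)^{n−k} with θ ∈ (0,1), the absolute log-ratio distance satisfies d(p_{θ,n}(k₁), p_{θ,n}(k₂)) ≤ (ln n + |ln(θ/(1−θ))|)·|k₁ − k₂| for all k₁, k₂ ∈ {0,…,n}. -/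
open MeasureTheory

/-- The binomial likelihood `p_{θ,n}(k) = C(n,k)·θ^k·(1−θ)^{n−k}`. -/
noncomputable def binomialDensity (θ : ℝ) (n k : ℕ) : ℝ :=
  (n.choose k : ℝ) * θ ^ k * (1 - θ) ^ (n - k)


lemma logchoose_step (n k : ℕ) (hk : k < n) :
    |Real.log (n.choose (k+1)) - Real.log (n.choose k)| ≤ Real.log n := by
  have h := Nat.choose_succ_right_eq n k
  have hc1 : (0:ℝ) < n.choose (k+1) := by exact_mod_cast Nat.choose_pos hk
  have hc0 : (0:ℝ) < n.choose k := by exact_mod_cast Nat.choose_pos hk.le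
  have hcast : (n.choose (k+1) : ℝ) * (k+1) = (n.choose k : ℝ) * (n - k : ℕ) := by
    exact_mod_cast congrArg (Nat.cast : ℕ → ℝ) h
  have hnk : (0:ℝ) < ((n - k : ℕ) : ℝ) := by
    have : 0 < n - k := Nat.sub_pos_of_lt hk
    exact_mod_cast this
  have hk1 : (0:ℝ) < ((k:ℝ)+1) := by positivity
  have hlog : Real.log (n.choose (k+1)) + Real.log ((k:ℝ)+1)
      = Real.log (n.choose k) + Real.log ((n - k : ℕ) : ℝ) := by
    rw [← Real.log_mul hc1.ne' hk1.ne', ← Real.log_mul hc0.ne' hnk.ne', hcast]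
  have h1 : Real.log ((k:ℝ)+1) ≤ Real.log n := by
    apply Real.log_le_log hk1
    have : k + 1 ≤ n := hk
    exact_mod_cast this
  have h2 : Real.log (((n-k:ℕ)):ℝ) ≤ Real.log n := by
    apply Real.log_le_log hnk
    exact_mod_cast Nat.sub_le n k
  have h3 : 0 ≤ Real.log ((k:ℝ)+1) := Real.log_nonneg (by linarith [Nat.cast_nonneg (α := ℝ) k])
  have h4 : 0 ≤ Real.log (((n-k:ℕ)):ℝ) := Real.log_nonneg (by exact_mod_cast Nat.sub_pos_of_lt hk)
  rw [abs_sub_le_iff]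
  constructor <;> linarith

lemma logchoose_lip (n : ℕ) : ∀ m k : ℕ, k + m ≤ n →
    |Real.log (n.choose (k+m)) - Real.log (n.choose k)| ≤ m * Real.log n := by
  intro m
  induction m with
  | zero => intro k _; simp
  | succ m ih =>
    intro k hkm
    have h1 := ih k (by omega)
    have h2 := logchoose_step n (k+m) (by omega)
    calc |Real.log (n.choose (k+(m+1))) - Real.log (n.choose k)|
        ≤ |Real.log (n.choose (k+m+1)) - Real.log (n.choose (k+m))|
          + |Real.log (n.choose (k+m)) - Real.log (n.choose k)| := by
          rw [show k+(m+1) = k+m+1 by ring]; exact abs_sub_le _ _ _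
      _ ≤ Real.log n + m * Real.log n := add_le_add h2 h1
      _ = (m+1 : ℕ) * Real.log n := by push_cast; ring

lemma logchoose_abs (n k₁ k₂ : ℕ) (h₁ : k₁ ≤ n) (h₂ : k₂ ≤ n) :
    |Real.log (n.choose k₁) - Real.log (n.choose k₂)| ≤ Real.log n * |(k₁:ℝ) - k₂| := by
  rcases le_total k₂ k₁ with h | h
  · obtain ⟨m, rfl⟩ := Nat.exists_eq_add_of_le h
    have := logchoose_lip n m k₂ (by omega)
    have habs : |((k₂:ℝ)+m) - k₂| = m := by
      rw [show ((k₂:ℝ)+m) - k₂ = m by ring, abs_of_nonneg (Nat.cast_nonneg m)]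
    push_cast [habs]
    linarith
  · obtain ⟨m, rfl⟩ := Nat.exists_eq_add_of_le h
    have := logchoose_lip n m k₁ (by omega)
    have habs : |(k₁:ℝ) - ((k₁:ℝ)+m)| = m := by
      rw [show (k₁:ℝ) - ((k₁:ℝ)+m) = -m by ring, abs_neg, abs_of_nonneg (Nat.cast_nonneg m)]
    push_cast [habs]
    rw [abs_sub_comm]
    linarith

/-- for `n ≥ 1` and `0 ≤ k₂ < k₁ ≤ n`, the chord slope of `k ↦ ln C(n,k)`
lies in `[−ln n, ln n]`; consequently, for the binomial likelihood with `θ ∈ (0,1)`,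
`d(p_{θ,n}(k₁), p_{θ,n}(k₂)) ≤ (ln n + |ln(θ/(1−θ))|)·|k₁ − k₂|` for all
`k₁, k₂ ∈ {0,…,n}`. -/
theorem binomial_chord_slope_and_lipschitz (n : ℕ) (hn : 1 ≤ n) :
    (∀ k₁ k₂ : ℕ, k₂ < k₁ → k₁ ≤ n →
      -Real.log n ≤ (Real.log (n.choose k₁) - Real.log (n.choose k₂)) / ((k₁ : ℝ) - k₂) ∧
      (Real.log (n.choose k₁) - Real.log (n.choose k₂)) / ((k₁ : ℝ) - k₂) ≤ Real.log n) ∧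
    (∀ θ : ℝ, θ ∈ Set.Ioo (0 : ℝ) 1 → ∀ k₁ k₂ : ℕ, k₁ ≤ n → k₂ ≤ n →
      lrdist (binomialDensity θ n k₁) (binomialDensity θ n k₂)
        ≤ (Real.log n + |Real.log (θ / (1 - θ))|) * |(k₁ : ℝ) - (k₂ : ℝ)|) := by
  constructor
  · intro k₁ k₂ hlt hle
    have hΔ : (0:ℝ) < (k₁:ℝ) - k₂ := sub_pos.mpr (by exact_mod_cast hlt)
    have habs := logchoose_abs n k₁ k₂ hle (by omega)
    rw [abs_of_pos hΔ] at habs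
    obtain ⟨ha, hb⟩ := abs_le.mp habs
    constructor
    · rw [le_div_iff₀ hΔ]; linarith
    · rw [div_le_iff₀ hΔ]; linarith
  · intro θ hθ k₁ k₂ h₁ h₂
    have hθ1 : (0:ℝ) < 1 - θ := by linarith [hθ.2]
    have hc1 : (0:ℝ) < n.choose k₁ := by exact_mod_cast Nat.choose_pos h₁
    have hc2 : (0:ℝ) < n.choose k₂ := by exact_mod_cast Nat.choose_pos h₂
    have hp1 : 0 < binomialDensity θ n k₁ :=
      mul_pos (mul_pos hc1 (pow_pos hθ.1 _)) (pow_pos hθ1 _)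
    have hp2 : 0 < binomialDensity θ n k₂ :=
      mul_pos (mul_pos hc2 (pow_pos hθ.1 _)) (pow_pos hθ1 _)
    rw [lrdist, if_neg (by push_neg; intro h; exact absurd h hp1.ne')]
    have hlog : Real.log (binomialDensity θ n k₁ / binomialDensity θ n k₂)
        = (Real.log (n.choose k₁) - Real.log (n.choose k₂))
          + ((k₁:ℝ) - k₂) * Real.log (θ / (1 - θ)) := by
      rw [Real.log_div hp1.ne' hp2.ne']
      unfold binomialDensity
      rw [Real.log_mul (mul_pos hc1 (pow_pos hθ.1 _)).ne' (pow_pos hθ1 _).ne',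
          Real.log_mul hc1.ne' (pow_pos hθ.1 _).ne',
          Real.log_mul (mul_pos hc2 (pow_pos hθ.1 _)).ne' (pow_pos hθ1 _).ne',
          Real.log_mul hc2.ne' (pow_pos hθ.1 _).ne',
          Real.log_pow, Real.log_pow, Real.log_pow, Real.log_pow,
          Real.log_div hθ.1.ne' hθ1.ne',
          Nat.cast_sub h₁, Nat.cast_sub h₂]
      ring
    rw [hlog]
    have h1 := logchoose_abs n k₁ k₂ h₁ h₂
    calc |(Real.log (n.choose k₁) - Real.log (n.choose k₂))
          + ((k₁:ℝ) - k₂) * Real.log (θ / (1 - θ))|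
        ≤ |Real.log (n.choose k₁) - Real.log (n.choose k₂)|
          + |(k₁:ℝ) - k₂| * |Real.log (θ / (1 - θ))| := by
          refine (abs_add_le _ _).trans ?_
          rw [abs_mul]
      _ ≤ Real.log n * |(k₁:ℝ) - k₂| + |(k₁:ℝ) - k₂| * |Real.log (θ / (1 - θ))| := by
          linarith
      _ = (Real.log n + |Real.log (θ / (1 - θ))|) * |(k₁:ℝ) - (k₂:ℝ)| := by ring
end

section
/- Consider the binomial likelihood p_{θ,n}(k) = C(n,k)·θ^k·(1−θ)^{n−k} on k ∈ {0,…,n} with θ ∈ (0,1), and for L ≥ ln n let Θ_L = [(1 + e^L/n)^{-1}, (1 + n/e^L)^{-1}] (which equals the set of θ for which d(p_{θ,n}(k₁), p_{θ,n}(k₂)) ≤ L·|k₁−k₂| for all k₁, k₂). Under the symmetric Beta(α, α) prior with α > 1, the prior mass outside Θ_L satisfies β(Θ_L^c) ≤ (2/(α·B(α,α)))·n^α·e^{−αL}, where B(α,α) is the Beta function; hence β(Θ_L) ≥ 1 − e^{−cL} holds for any c ≤ α − ln( 2·n^α/(α·B(α,α)) )/L whenever the right side is positive — in particular Assumption 2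 holds with c = O(α). -/
/-!
Consecutive binomial likelihoods satisfy `p(k+1) / p(k) = (n - k) θ / ((k + 1) (1 - θ))`, a ratio
decreasing in `k`. On positive values the log-ratio distance is a difference of logarithms, so
the Lipschitz condition telescopes to consecutive steps and, by monotonicity, reduces to the steps
`0 → 1` and `n - 1 → n`, i.e. to
`n e^{-L} ≤ θ / (1 - θ) ≤ e^L / n`, which is `Θ_L`. Below `Θ_L` the `Beta(α, α)` density is at
most `θ^{α-1} / B(α, α)` and above it at most `(1 - θ)^{α-1} / B(α, α)`; since `θ ↦ 1 - θ` swaps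
the endpoints of `Θ_L`, each tail has mass at most `(n e^{-L})^α / (α B(α, α))`.
-/

open MeasureTheory

/-- The Beta function `B(a,b) = ∫₀¹ x^{a−1}(1−x)^{b−1} dx`. -/
noncomputable def betaFn (a b : ℝ) : ℝ :=
  ∫ x in (0 : ℝ)..1, x ^ (a - 1) * (1 - x) ^ (b - 1)

/-- The `Beta(a,b)` prior: density `θ^{a−1}(1−θ)^{b−1}/B(a,b)` on `(0,1)`. -/
noncomputable def betaPrior (a b : ℝ) : Measure ℝ :=
  volume.withDensity fun θ =>
    if θ ∈ Set.Ioo (0 : ℝ) 1 then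
      ENNReal.ofReal (θ ^ (a - 1) * (1 - θ) ^ (b - 1) / betaFn a b) else 0

/-- The interval `Θ_L = [(1 + e^L/n)⁻¹, (1 + n/e^L)⁻¹]`. -/
noncomputable def thetaL (n : ℕ) (L : ℝ) : Set ℝ :=
  Set.Icc ((1 + Real.exp L / n)⁻¹) ((1 + n / Real.exp L)⁻¹)

open Real

lemma abs_log_sub_log_le_iff {u v L : ℝ} (hu : 0 < u) (hv : 0 < v) :
    |log u - log v| ≤ L ↔ u ≤ exp L * v ∧ v ≤ exp L * u := by
  rw [← log_div hu.ne' hv.ne', abs_le, le_log_iff_exp_le (by positivity),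
    log_le_iff_le_exp (by positivity), le_div_iff₀ hv, div_le_iff₀ hv, exp_neg,
    inv_mul_le_iff₀ (exp_pos L)]
  exact and_comm

lemma lrdist_of_pos {u v : ℝ} (hu : 0 < u) (hv : 0 < v) : lrdist u v = |log u - log v| := by
  rw [lrdist, if_neg fun h => hu.ne' h.1, log_div hu.ne' hv.ne']

lemma abs_sub_le_mul_of_abs_succ_sub_le {f : ℕ → ℝ} {n : ℕ} {L : ℝ}
    (hf : ∀ k < n, |f (k + 1) - f k| ≤ L) {k₁ k₂ : ℕ} (h₁ : k₁ ≤ n) (h₂ : k₂ ≤ n) :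
    |f k₁ - f k₂| ≤ L * |(k₁ : ℝ) - k₂| := by
  wlog h : k₁ ≤ k₂ generalizing k₁ k₂
  · rw [abs_sub_comm, abs_sub_comm (k₁ : ℝ)]
    exact this h₂ h₁ (le_of_not_ge h)
  have hsum := dist_le_Ico_sum_of_dist_le (f := f) h (d := fun _ => L) fun _ hk => by
    rw [dist_comm, Real.dist_eq]; exact hf _ (by omega)
  rw [Finset.sum_const, Nat.card_Ico, nsmul_eq_mul, Nat.cast_sub h, Real.dist_eq] at hsum
  rwa [abs_sub_comm (k₁ : ℝ), abs_of_nonneg (sub_nonneg.2 (Nat.cast_le.2 h)), mul_comm]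

section Binomial

variable {θ L : ℝ} {n k : ℕ}

lemma binomialDensity_pos (hθ : θ ∈ Set.Ioo 0 1) (hk : k ≤ n) : 0 < binomialDensity θ n k := by
  have := hθ.1; have := sub_pos.2 hθ.2
  have : (0 : ℝ) < n.choose k := by exact_mod_cast Nat.choose_pos hk
  unfold binomialDensity; positivity

lemma binomialDensity_succ_mul (θ : ℝ) (hk : k < n) :
    binomialDensity θ n (k + 1) * ((k + 1) * (1 - θ)) = binomialDensity θ n k * ((n - k) * θ) := by
  have hchoose : (n.choose (k + 1) : ℝ) * (k + 1) = n.choose k * (n - k) := by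
    have := Nat.choose_succ_right_eq n k
    rw [← Nat.cast_sub hk.le]
    exact_mod_cast this
  unfold binomialDensity
  rw [show n - k = n - (k + 1) + 1 by omega]
  linear_combination θ ^ (k + 1) * (1 - θ) ^ (n - (k + 1) + 1) * hchoose

lemma abs_log_binomialDensity_succ_sub_le_iff (hθ : θ ∈ Set.Ioo 0 1) (hk : k < n) :
    |log (binomialDensity θ n (k + 1)) - log (binomialDensity θ n k)| ≤ L ↔
      (n - k) * θ ≤ exp L * ((k + 1) * (1 - θ)) ∧ (k + 1) * (1 - θ) ≤ exp L * ((n - k) * θ) := by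
  have h0 := hθ.1; have h1 := sub_pos.2 hθ.2
  have hnk : (0 : ℝ) < n - k := by rw [sub_pos]; exact_mod_cast hk
  have hp := binomialDensity_pos hθ hk
  have hp' := binomialDensity_pos hθ hk.le
  have hlog : log (binomialDensity θ n (k + 1)) - log (binomialDensity θ n k) =
      log ((n - k) * θ) - log ((k + 1) * (1 - θ)) := by
    have := congrArg log (binomialDensity_succ_mul θ hk)
    rw [log_mul hp.ne' (by positivity), log_mul hp'.ne' (by positivity)] at this
    linarith
  rw [hlog, abs_log_sub_log_le_iff (by positivity) (by positivity)]

lemma binomialDensity_lipschitz_iff (hθ : θ ∈ Set.Ioo 0 1) (hn : 1 ≤ n) :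
    (∀ k₁ k₂ : ℕ, k₁ ≤ n → k₂ ≤ n →
      lrdist (binomialDensity θ n k₁) (binomialDensity θ n k₂) ≤ L * |(k₁ : ℝ) - k₂|) ↔
      n * (1 - θ) ≤ exp L * θ ∧ n * θ ≤ exp L * (1 - θ) := by
  have h0 := hθ.1; have h1 := sub_pos.2 hθ.2
  constructor
  · intro h
    have step : ∀ k < n, |log (binomialDensity θ n (k + 1)) - log (binomialDensity θ n k)| ≤ L :=
      fun k hk => by
        simpa [lrdist_of_pos (binomialDensity_pos hθ hk) (binomialDensity_pos hθ hk.le)]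
          using h (k + 1) k hk hk.le
    -- the extreme steps `0 → 1` and `n - 1 → n` carry the two constraints
    have hfirst := ((abs_log_binomialDensity_succ_sub_le_iff hθ (by omega : 0 < n)).1
      (step 0 (by omega))).1
    have hlast := ((abs_log_binomialDensity_succ_sub_le_iff hθ (by omega : n - 1 < n)).1
      (step (n - 1) (by omega))).2
    rw [Nat.cast_sub hn] at hlast
    push_cast at hfirst hlast
    constructor <;> linarith
  · rintro ⟨hlo, hhi⟩ k₁ k₂ h₁ h₂
    rw [lrdist_of_pos (binomialDensity_pos hθ h₁) (binomialDensity_pos hθ h₂)]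
    refine abs_sub_le_mul_of_abs_succ_sub_le (f := fun k => log (binomialDensity θ n k))
      (fun k hk => (abs_log_binomialDensity_succ_sub_le_iff hθ hk).2 ⟨?_, ?_⟩) h₁ h₂
    all_goals have hk0 : (0 : ℝ) ≤ k := k.cast_nonneg
    all_goals have hkn : (k : ℝ) + 1 ≤ n := by exact_mod_cast hk
    · calc (n - k) * θ ≤ n * θ := by nlinarith
        _ ≤ exp L * (1 - θ) := hhi
        _ ≤ exp L * ((k + 1) * (1 - θ)) := by gcongr; nlinarith
    · calc (k + 1) * (1 - θ) ≤ n * (1 - θ) := by gcongr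
        _ ≤ exp L * θ := hlo
        _ ≤ exp L * ((n - k) * θ) := by gcongr; nlinarith

lemma mem_thetaL_iff (hn : 1 ≤ n) :
    θ ∈ thetaL n L ↔ n * (1 - θ) ≤ exp L * θ ∧ n * θ ≤ exp L * (1 - θ) := by
  have hN : (0 : ℝ) < n := by exact_mod_cast hn
  have hE := exp_pos L
  rw [thetaL, Set.mem_Icc, ← one_div, ← one_div, div_le_iff₀ (by positivity),
    le_div_iff₀ (by positivity)]
  field_simp
  constructor <;> rintro ⟨h₁, h₂⟩ <;> constructor <;> linarith

lemma thetaL_eq_setOf_lipschitz (hn : 1 ≤ n) (L : ℝ) :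
    thetaL n L = {θ : ℝ | θ ∈ Set.Ioo (0 : ℝ) 1 ∧ ∀ k₁ k₂ : ℕ, k₁ ≤ n → k₂ ≤ n →
      lrdist (binomialDensity θ n k₁) (binomialDensity θ n k₂) ≤ L * |(k₁ : ℝ) - k₂|} := by
  have hN : (0 : ℝ) < n := by exact_mod_cast hn
  have hE := exp_pos L
  ext θ
  rw [Set.mem_ofPred_eq, mem_thetaL_iff hn]
  constructor
  · rintro ⟨hlo, hhi⟩
    have hθ : θ ∈ Set.Ioo 0 1 := ⟨by nlinarith, by nlinarith⟩
    exact ⟨hθ, (binomialDensity_lipschitz_iff hθ hn).2 ⟨hlo, hhi⟩⟩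
  · rintro ⟨hθ, h⟩
    exact (binomialDensity_lipschitz_iff hθ hn).1 h

end Binomial

section BetaPrior

variable {a b : ℝ}

lemma continuous_rpow_sub_one (ha : 1 ≤ a) : Continuous fun x : ℝ => x ^ (a - 1) :=
  Real.continuous_rpow_const (by linarith)

lemma betaFn_pos (ha : 1 ≤ a) (hb : 1 ≤ b) : 0 < betaFn a b := by
  refine intervalIntegral.intervalIntegral_pos_of_pos_on ?_ (fun x hx => ?_) zero_lt_one
  · exact ((continuous_rpow_sub_one ha).mul ((continuous_rpow_sub_one hb).comp
      (continuous_const.sub continuous_id))).intervalIntegrable 0 1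
  · have := hx.1; have := sub_pos.2 hx.2
    positivity

lemma betaPrior_compl_Ioo : betaPrior a b (Set.Ioo 0 1)ᶜ = 0 := by
  rw [betaPrior, withDensity_apply _ measurableSet_Ioo.compl,
    setLIntegral_congr_fun measurableSet_Ioo.compl fun x hx => if_neg hx, lintegral_zero]

lemma isProbabilityMeasure_betaPrior (ha : 1 ≤ a) (hb : 1 ≤ b) :
    IsProbabilityMeasure (betaPrior a b) := by
  have hB := betaFn_pos ha hb
  have hcont : Continuous fun x : ℝ => x ^ (a - 1) * (1 - x) ^ (b - 1) / betaFn a b :=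
    ((continuous_rpow_sub_one ha).mul ((continuous_rpow_sub_one hb).comp
      (continuous_const.sub continuous_id))).div_const _
  constructor
  rw [← measure_add_measure_compl measurableSet_Ioo, betaPrior_compl_Ioo, add_zero, betaPrior,
    withDensity_apply _ measurableSet_Ioo,
    setLIntegral_congr_fun measurableSet_Ioo fun x hx => if_pos hx,
    ← ofReal_integral_eq_lintegral_ofReal (hcont.integrableOn_Icc.mono_set Set.Ioo_subset_Icc_self)]
  · rw [integral_div, ← integral_Ioc_eq_integral_Ioo, ← intervalIntegral.integral_of_le zero_le_one]
    exact ENNReal.ofReal_eq_one.2 (div_self hB.ne')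
  · filter_upwards [ae_restrict_mem measurableSet_Ioo] with x hx
    have := hx.1; have := sub_pos.2 hx.2
    positivity

lemma integral_rpow_sub_one (ha : 0 < a) {t : ℝ} : ∫ x in (0 : ℝ)..t, x ^ (a - 1) = t ^ a / a := by
  rw [integral_rpow (Or.inl (by linarith)), sub_add_cancel, Real.zero_rpow ha.ne', sub_zero]

lemma betaPrior_Ioo_zero_le (ha : 1 ≤ a) (hb : 1 ≤ b) {t : ℝ} (ht : 0 ≤ t) :
    betaPrior a b (Set.Ioo 0 t) ≤ ENNReal.ofReal (t ^ a / (a * betaFn a b)) := by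
  have hB := betaFn_pos ha hb
  have hcont : Continuous fun x : ℝ => x ^ (a - 1) / betaFn a b :=
    (continuous_rpow_sub_one ha).div_const _
  rw [betaPrior, withDensity_apply _ measurableSet_Ioo]
  calc _ ≤ ∫⁻ x in Set.Ioo 0 t, ENNReal.ofReal (x ^ (a - 1) / betaFn a b) := by
        refine setLIntegral_mono hcont.measurable.ennreal_ofReal fun x hx => ?_
        split_ifs with h01
        · have hx1 : (1 - x) ^ (b - 1) ≤ 1 :=
            Real.rpow_le_one (sub_pos.2 h01.2).le (by linarith [h01.1]) (by linarith)
          have := Real.rpow_nonneg h01.1.le (a - 1)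
          gcongr
          exact mul_le_of_le_one_right this hx1
        · exact zero_le
    _ = ENNReal.ofReal (∫ x in Set.Ioo 0 t, x ^ (a - 1) / betaFn a b) := by
        refine (ofReal_integral_eq_lintegral_ofReal
          (hcont.integrableOn_Icc.mono_set Set.Ioo_subset_Icc_self) ?_).symm
        filter_upwards [ae_restrict_mem measurableSet_Ioo] with x hx
        have := hx.1
        positivity
    _ = ENNReal.ofReal (t ^ a / (a * betaFn a b)) := by
        rw [integral_div, ← integral_Ioc_eq_integral_Ioo, ← intervalIntegral.integral_of_le ht,
          integral_rpow_sub_one (by linarith), div_div]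

lemma betaPrior_Ioo_one_le (ha : 1 ≤ a) (hb : 1 ≤ b) {s : ℝ} (hs : s ≤ 1) :
    betaPrior a b (Set.Ioo s 1) ≤ ENNReal.ofReal ((1 - s) ^ b / (b * betaFn a b)) := by
  have hB := betaFn_pos ha hb
  have hcont : Continuous fun x : ℝ => (1 - x) ^ (b - 1) / betaFn a b :=
    ((continuous_rpow_sub_one hb).comp (continuous_const.sub continuous_id)).div_const _
  rw [betaPrior, withDensity_apply _ measurableSet_Ioo]
  calc _ ≤ ∫⁻ x in Set.Ioo s 1, ENNReal.ofReal ((1 - x) ^ (b - 1) / betaFn a b) := by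
        refine setLIntegral_mono hcont.measurable.ennreal_ofReal fun x hx => ?_
        split_ifs with h01
        · have hx1 : x ^ (a - 1) ≤ 1 :=
            Real.rpow_le_one h01.1.le h01.2.le (by linarith)
          have := Real.rpow_nonneg (sub_pos.2 h01.2).le (b - 1)
          gcongr
          exact mul_le_of_le_one_left this hx1
        · exact zero_le
    _ = ENNReal.ofReal (∫ x in Set.Ioo s 1, (1 - x) ^ (b - 1) / betaFn a b) := by
        refine (ofReal_integral_eq_lintegral_ofReal
          (hcont.integrableOn_Icc.mono_set Set.Ioo_subset_Icc_self) ?_).symm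
        filter_upwards [ae_restrict_mem measurableSet_Ioo] with x hx
        have := sub_pos.2 hx.2
        positivity
    _ = ENNReal.ofReal ((1 - s) ^ b / (b * betaFn a b)) := by
        rw [integral_div, ← integral_Ioc_eq_integral_Ioo, ← intervalIntegral.integral_of_le hs,
          intervalIntegral.integral_comp_sub_left (fun x => x ^ (b - 1)), sub_self,
          integral_rpow_sub_one (by linarith), div_div]

end BetaPrior

lemma betaPrior_compl_Icc_le {a q : ℝ} (ha : 1 ≤ a) (hq : 0 < q) :
    betaPrior a a (Set.Icc (1 + q⁻¹)⁻¹ (1 + q)⁻¹)ᶜ ≤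
      ENNReal.ofReal (2 / (a * betaFn a a) * q ^ a) := by
  have hB := betaFn_pos ha ha
  set θ₀ := (1 + q⁻¹)⁻¹ with hθ₀_def
  have hθ₀ : 0 < θ₀ := by positivity
  have hθ₀q : θ₀ ≤ q := by
    rw [hθ₀_def, inv_le_comm₀ (by positivity) hq]; linarith
  -- `θ ↦ 1 - θ` swaps the two endpoints, so both tails have the same bound
  have hsymm : 1 - (1 + q)⁻¹ = θ₀ := by rw [hθ₀_def]; field_simp; ring
  have hsub : (Set.Icc θ₀ (1 + q)⁻¹)ᶜ ∩ Set.Ioo 0 1 ⊆ Set.Ioo 0 θ₀ ∪ Set.Ioo (1 + q)⁻¹ 1 := by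
    rintro x ⟨hx, hx0, hx1⟩
    rw [Set.mem_compl_iff, Set.mem_Icc, not_and_or, not_le, not_le] at hx
    exact hx.imp (fun h => ⟨hx0, h⟩) (fun h => ⟨h, hx1⟩)
  calc betaPrior a a (Set.Icc θ₀ (1 + q)⁻¹)ᶜ
      = betaPrior a a ((Set.Icc θ₀ (1 + q)⁻¹)ᶜ ∩ Set.Ioo 0 1) :=
        (measure_inter_conull betaPrior_compl_Ioo).symm
    _ ≤ betaPrior a a (Set.Ioo 0 θ₀) + betaPrior a a (Set.Ioo (1 + q)⁻¹ 1) :=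
        (measure_mono hsub).trans (measure_union_le _ _)
    _ ≤ ENNReal.ofReal (θ₀ ^ a / (a * betaFn a a)) +
          ENNReal.ofReal ((1 - (1 + q)⁻¹) ^ a / (a * betaFn a a)) :=
        add_le_add (betaPrior_Ioo_zero_le ha ha hθ₀.le)
          (betaPrior_Ioo_one_le ha ha (inv_le_one_of_one_le₀ (by linarith)))
    _ ≤ ENNReal.ofReal (q ^ a / (a * betaFn a a)) + ENNReal.ofReal (q ^ a / (a * betaFn a a)) := by
        rw [hsymm]; gcongr
    _ = ENNReal.ofReal (2 / (a * betaFn a a) * q ^ a) := by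
        rw [← ENNReal.ofReal_add (by positivity) (by positivity)]; ring_nf

lemma betaPrior_compl_thetaL_le {n : ℕ} (hn : 1 ≤ n) {a : ℝ} (ha : 1 ≤ a) (L : ℝ) :
    betaPrior a a (thetaL n L)ᶜ ≤
      ENNReal.ofReal (2 / (a * betaFn a a) * (n : ℝ) ^ a * exp (-(a * L))) := by
  have hN : (0 : ℝ) < n := by exact_mod_cast hn
  have hq : (n / exp L) ^ a = (n : ℝ) ^ a * exp (-(a * L)) := by
    rw [Real.div_rpow hN.le (exp_pos L).le, ← exp_mul, exp_neg, div_eq_mul_inv, mul_comm L]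
  rw [thetaL, ← inv_div, mul_assoc, ← hq]
  exact betaPrior_compl_Icc_le ha (by positivity)

lemma ofReal_one_sub_le_of_measure_compl_le {Ω : Type*} [MeasurableSpace Ω] {μ : Measure Ω}
    [IsProbabilityMeasure μ] {s : Set Ω} (hs : MeasurableSet s) {ε : ℝ} (hε : 0 ≤ ε)
    (h : μ sᶜ ≤ ENNReal.ofReal ε) : ENNReal.ofReal (1 - ε) ≤ μ s := by
  rw [ENNReal.ofReal_sub 1 hε, ENNReal.ofReal_one, ← compl_compl s, prob_compl_eq_one_sub hs.compl]
  exact tsub_le_tsub_left h 1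

lemma mul_exp_neg_le_exp_neg_of_le_sub_log_div {D a c L : ℝ} (hD : 0 < D) (hL : 0 < L)
    (hc : c ≤ a - log D / L) : D * exp (-(a * L)) ≤ exp (-(c * L)) := by
  have hcL : c * L ≤ a * L - log D := by
    have := mul_le_mul_of_nonneg_right hc hL.le
    rwa [sub_mul, div_mul_cancel₀ _ hL.ne'] at this
  rw [← exp_log hD, ← exp_add, exp_le_exp]
  linarith

/-- for the binomial likelihood with symmetric `Beta(α,α)` prior, `α > 1`:
for `L ≥ ln n`, the interval `Θ_L = [(1+e^L/n)⁻¹, (1+n/e^L)⁻¹]` is exactly the set of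
`θ ∈ (0,1)` that are `L`-Lipschitz in the absolute log-ratio distance w.r.t.
`ρ(k₁,k₂) = |k₁−k₂|`; the prior mass outside `Θ_L` is at most
`(2/(α·B(α,α)))·n^α·e^{−αL}`; hence `β(Θ_L) ≥ 1 − e^{−cL}` for any
`c ≤ α − ln(2·n^α/(α·B(α,α)))/L` whenever the latter quantity is positive. -/
theorem beta_binomial_assumption2 (n : ℕ) (hn : 1 ≤ n) (a : ℝ) (ha : 1 < a) :
    (∀ L : ℝ, Real.log n ≤ L →
      thetaL n L =
        {θ : ℝ | θ ∈ Set.Ioo (0 : ℝ) 1 ∧ ∀ k₁ k₂ : ℕ, k₁ ≤ n → k₂ ≤ n →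
          lrdist (binomialDensity θ n k₁) (binomialDensity θ n k₂)
            ≤ L * |(k₁ : ℝ) - (k₂ : ℝ)|}) ∧
    (∀ L : ℝ, Real.log n ≤ L →
      betaPrior a a (thetaL n L)ᶜ
        ≤ ENNReal.ofReal (2 / (a * betaFn a a) * (n : ℝ) ^ a * Real.exp (-(a * L)))) ∧
    (∀ L : ℝ, Real.log n ≤ L → 0 < L → ∀ c : ℝ,
      0 < a - Real.log (2 * (n : ℝ) ^ a / (a * betaFn a a)) / L →
      c ≤ a - Real.log (2 * (n : ℝ) ^ a / (a * betaFn a a)) / L →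
      ENNReal.ofReal (1 - Real.exp (-(c * L))) ≤ betaPrior a a (thetaL n L)) := by
  refine ⟨fun L _ => thetaL_eq_setOf_lipschitz hn L,
    fun L _ => betaPrior_compl_thetaL_le hn ha.le L, fun L _ hL c _ hc => ?_⟩
  have := isProbabilityMeasure_betaPrior ha.le ha.le
  have hB := betaFn_pos ha.le ha.le
  refine ofReal_one_sub_le_of_measure_compl_le measurableSet_Icc (exp_nonneg _)
    ((betaPrior_compl_thetaL_le hn ha.le L).trans (ENNReal.ofReal_le_ofReal ?_))
  calc 2 / (a * betaFn a a) * (n : ℝ) ^ a * exp (-(a * L))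
      = 2 * (n : ℝ) ^ a / (a * betaFn a a) * exp (-(a * L)) := by ring
    _ ≤ exp (-(c * L)) := mul_exp_neg_le_exp_neg_of_le_sub_log_div (by positivity) hL hc
end

section
/- For the normal likelihood p_{μ,σ}(x) = (1/(σ√(2π)))·exp(−(x−μ)²/(2σ²)) with mean μ ∈ ℝ and variance σ² > 0, the absolute log-ratio distance satisfies d(p_{μ,σ}(x), p_{μ,σ}(y)) = (1/(2σ²))·|(x−μ)² − (y−μ)²| ≤ (max{|μ|, 1}/(2σ²))·(|x² − y²| + 2|x − y|) for all x, y ∈ ℝ; that is, the normal family is Lipschitz with constant L(μ,σ) = max{|μ|,1}/(2σ²) with respect to the pseudo-metric ρ(x,y) = |x² − y²| + 2|x − y|. -/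
open MeasureTheory

/-- The normal density `p_{μ,σ}(x) = (1/(σ√(2π)))·exp(−(x−μ)²/(2σ²))`. -/
noncomputable def normalDensity (μ σ x : ℝ) : ℝ :=
  (σ * Real.sqrt (2 * Real.pi))⁻¹ * Real.exp (-((x - μ) ^ 2 / (2 * σ ^ 2)))

/-- for the normal likelihood with mean `μ` and standard deviation `σ > 0`,
`d(p_{μ,σ}(x), p_{μ,σ}(y)) = (1/(2σ²))·|(x−μ)² − (y−μ)²|
  ≤ (max{|μ|,1}/(2σ²))·(|x² − y²| + 2|x − y|)`;
i.e. the normal family is Lipschitz with constant `L(μ,σ) = max{|μ|,1}/(2σ²)` w.r.t. the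
pseudo-metric `ρ(x,y) = |x² − y²| + 2|x − y|`. -/
theorem normal_lipschitz (μ σ : ℝ) (hσ : 0 < σ) (x y : ℝ) :
    lrdist (normalDensity μ σ x) (normalDensity μ σ y)
        = (2 * σ ^ 2)⁻¹ * |(x - μ) ^ 2 - (y - μ) ^ 2| ∧
    lrdist (normalDensity μ σ x) (normalDensity μ σ y)
        ≤ max |μ| 1 / (2 * σ ^ 2) * (|x ^ 2 - y ^ 2| + 2 * |x - y|) := by
  have hc : (0:ℝ) < (σ * Real.sqrt (2 * Real.pi))⁻¹ := by
    positivity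
  have hpx : 0 < normalDensity μ σ x := by
    unfold normalDensity; positivity
  have hpy : 0 < normalDensity μ σ y := by
    unfold normalDensity; positivity
  have hσ2 : (0:ℝ) < 2 * σ ^ 2 := by positivity
  have hlog : Real.log (normalDensity μ σ x / normalDensity μ σ y)
      = ((y - μ) ^ 2 - (x - μ) ^ 2) / (2 * σ ^ 2) := by
    rw [Real.log_div hpx.ne' hpy.ne']
    unfold normalDensity
    rw [Real.log_mul hc.ne' (Real.exp_ne_zero _),
        Real.log_mul hc.ne' (Real.exp_ne_zero _),
        Real.log_exp, Real.log_exp]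
    ring
  have heq : lrdist (normalDensity μ σ x) (normalDensity μ σ y)
      = (2 * σ ^ 2)⁻¹ * |(x - μ) ^ 2 - (y - μ) ^ 2| := by
    unfold lrdist
    rw [if_neg (by push_neg; intro h; exact absurd h hpx.ne')]
    rw [hlog, abs_div, abs_of_pos hσ2, ← abs_neg]
    ring_nf
  refine ⟨heq, ?_⟩
  rw [heq]
  rw [div_eq_inv_mul, mul_assoc]
  refine mul_le_mul_of_nonneg_left ?_ (by positivity)
  have h1 : |(x - μ) ^ 2 - (y - μ) ^ 2| ≤ |x ^ 2 - y ^ 2| + |μ| * (2 * |x - y|) := by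
    have : (x - μ) ^ 2 - (y - μ) ^ 2 = (x ^ 2 - y ^ 2) + (-(2 * μ)) * (x - y) := by ring
    rw [this]
    calc |(x ^ 2 - y ^ 2) + (-(2 * μ)) * (x - y)|
        ≤ |x ^ 2 - y ^ 2| + |(-(2 * μ)) * (x - y)| := abs_add_le _ _
      _ = |x ^ 2 - y ^ 2| + |μ| * (2 * |x - y|) := by
          rw [abs_mul, abs_neg, abs_mul]
          simp [abs_of_nonneg]; ring
  calc |(x - μ) ^ 2 - (y - μ) ^ 2| ≤ |x ^ 2 - y ^ 2| + |μ| * (2 * |x - y|) := h1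
    _ ≤ max |μ| 1 * |x ^ 2 - y ^ 2| + max |μ| 1 * (2 * |x - y|) := by
        gcongr
        · nlinarith [le_max_right |μ| 1, abs_nonneg (x^2 - y^2)]
        · exact le_max_left _ _
    _ = max |μ| 1 * (|x ^ 2 - y ^ 2| + 2 * |x - y|) := by ring
end

section
/- Let S = Π_{k=1}^K S_k be a product of finite sets and for each θ let P_θ(x) = Π_{k=1}^K θ_{k, x_k} be a fully factorised (independent-variable) discrete distribution on S, where θ_{k,i} > 0 are the category probabilities. Let ρ(x, y) = Σ_{k=1}^K 1[x_k ≠ y_k] be the Hamming distance on S. If ε > 0 is a lower bound on every probability θ_{k,i}, then for all x, y ∈ S, the absolute log-ratio distance satisfies d(P_θ(x), P_θ(y)) ≤ max_{i,j,k} |ln(θ_{k,i}/θ_{k,j})|·ρ(x,y) ≤ ln(1/ε)·ρ(x,y); i.e., Assumption 1 holds with L = ln(1/ε) under the Hamming distance. -/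
open MeasureTheory

/-! The log-ratio of two product probabilities is the sum of the coordinatewise log-ratios,
and only the coordinates where the two points differ contribute. Each of those contributes
at most `M`, and when all probabilities lie in `[ε, 1]` one may take `M = ln (1/ε)`. -/

open Finset

lemma lrdist_of_pos_s17 {a : ℝ} (ha : 0 < a) (b : ℝ) : lrdist a b = |Real.log (a / b)| :=
  if_neg fun h => ha.ne' h.1

lemma Real.log_prod_div_prod {ι : Type*} (s : Finset ι) {f g : ι → ℝ}
    (hf : ∀ i ∈ s, 0 < f i) (hg : ∀ i ∈ s, 0 < g i) :
    Real.log ((∏ i ∈ s, f i) / ∏ i ∈ s, g i) = ∑ i ∈ s, Real.log (f i / g i) := by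
  rw [← prod_div_distrib, Real.log_prod]
  exact fun i hi => (div_pos (hf i hi) (hg i hi)).ne'

section Hamming

variable {ι : Type*} [Fintype ι] {β : ι → Type*} [∀ i, DecidableEq (β i)]

lemma abs_sum_le_mul_hammingDist {g : (i : ι) → β i → β i → ℝ} {M : ℝ}
    (hg_diag : ∀ i a, g i a a = 0) (hg_le : ∀ i a b, |g i a b| ≤ M) (x y : ∀ i, β i) :
    |∑ i, g i (x i) (y i)| ≤ M * hammingDist x y := by
  have h_support : ∑ i ∈ {i | x i ≠ y i}, g i (x i) (y i) = ∑ i, g i (x i) (y i) :=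
    sum_filter_of_ne fun i _ hne heq => hne (heq ▸ hg_diag i (x i))
  calc |∑ i, g i (x i) (y i)|
      ≤ ∑ i ∈ {i | x i ≠ y i}, |g i (x i) (y i)| := h_support ▸ abs_sum_le_sum_abs _ _
    _ ≤ #{i | x i ≠ y i} • M := sum_le_card_nsmul _ _ _ fun i _ => hg_le i _ _
    _ = M * hammingDist x y := by rw [nsmul_eq_mul, mul_comm, hammingDist]

lemma lrdist_prod_le_mul_hammingDist {θ : (i : ι) → β i → ℝ} {M : ℝ}
    (hθ_pos : ∀ i a, 0 < θ i a) (hM : ∀ i a b, |Real.log (θ i a / θ i b)| ≤ M)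
    (x y : ∀ i, β i) :
    lrdist (∏ i, θ i (x i)) (∏ i, θ i (y i)) ≤ M * hammingDist x y := by
  rw [lrdist_of_pos_s17 (prod_pos fun i _ => hθ_pos i _),
    Real.log_prod_div_prod _ (fun i _ => hθ_pos i _) (fun i _ => hθ_pos i _)]
  refine abs_sum_le_mul_hammingDist (fun i a => ?_) hM x y
  rw [div_self (hθ_pos i a).ne', Real.log_one]

end Hamming

lemma abs_log_div_le_log_one_div {ε a b : ℝ} (hε : 0 < ε) (hεa : ε ≤ a) (ha : a ≤ 1)
    (hεb : ε ≤ b) (hb : b ≤ 1) : |Real.log (a / b)| ≤ Real.log (1 / ε) := by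
  have ha_pos := hε.trans_le hεa
  have hb_pos := hε.trans_le hεb
  have hla := Real.log_le_log hε hεa
  have hlb := Real.log_le_log hε hεb
  have hla' := Real.log_nonpos ha_pos.le ha
  have hlb' := Real.log_nonpos hb_pos.le hb
  rw [Real.log_div ha_pos.ne' hb_pos.ne', one_div, Real.log_inv, abs_sub_le_iff]
  constructor <;> linarith

theorem discrete_factorised_lipschitz_general
    {K : ℕ} (S : Fin K → Type*) [∀ k, Fintype (S k)] [∀ k, DecidableEq (S k)]
    (θ : (k : Fin K) → S k → ℝ)
    (hθ_sum : ∀ k, ∑ i, θ k i = 1)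
    (ε : ℝ) (hε : 0 < ε)
    (hθ_lb : ∀ k i, ε ≤ θ k i)
    (x y : (k : Fin K) → S k) :
    (∀ M : ℝ, (∀ k : Fin K, ∀ i j : S k, |Real.log (θ k i / θ k j)| ≤ M) →
      lrdist (∏ k, θ k (x k)) (∏ k, θ k (y k))
        ≤ M * (Finset.univ.filter fun k => x k ≠ y k).card) ∧
    lrdist (∏ k, θ k (x k)) (∏ k, θ k (y k))
      ≤ Real.log (1 / ε) * (Finset.univ.filter fun k => x k ≠ y k).card := by
  have hθ_pos : ∀ k i, 0 < θ k i := fun k i => hε.trans_le (hθ_lb k i)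
  have hθ_le_one : ∀ k i, θ k i ≤ 1 := fun k i =>
    hθ_sum k ▸ single_le_sum (fun j _ => (hθ_pos k j).le) (mem_univ i)
  refine ⟨fun M hM => lrdist_prod_le_mul_hammingDist hθ_pos hM x y,
    lrdist_prod_le_mul_hammingDist hθ_pos (fun k i j => ?_) x y⟩
  exact abs_log_div_le_log_one_div hε (hθ_lb k i) (hθ_le_one k i) (hθ_lb k j) (hθ_le_one k j)

/-- for a fully factorised discrete distribution
`P_θ(x) = Π_k θ_{k, x_k}` on a product of finite sets, with all category probabilities
positive and bounded below by `ε > 0`, and `ρ` the Hamming distance, the absolute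
log-ratio distance satisfies
`d(P_θ(x), P_θ(y)) ≤ max_{i,j,k} |ln(θ_{k,i}/θ_{k,j})|·ρ(x,y) ≤ ln(1/ε)·ρ(x,y)`;
i.e., Assumption 1 holds with `L = ln(1/ε)` under the Hamming distance. -/
theorem discrete_factorised_lipschitz
    {K : ℕ} (S : Fin K → Type*) [∀ k, Fintype (S k)] [∀ k, DecidableEq (S k)]
    (θ : (k : Fin K) → S k → ℝ)
    (hθ_pos : ∀ k i, 0 < θ k i)
    (hθ_sum : ∀ k, ∑ i, θ k i = 1)
    (ε : ℝ) (hε : 0 < ε)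
    (hθ_lb : ∀ k i, ε ≤ θ k i)
    (x y : (k : Fin K) → S k) :
    (∀ M : ℝ, (∀ k : Fin K, ∀ i j : S k, |Real.log (θ k i / θ k j)| ≤ M) →
      lrdist (∏ k, θ k (x k)) (∏ k, θ k (y k))
        ≤ M * (Finset.univ.filter fun k => x k ≠ y k).card) ∧
    lrdist (∏ k, θ k (x k)) (∏ k, θ k (y k))
      ≤ Real.log (1 / ε) * (Finset.univ.filter fun k => x k ≠ y k).card :=
  discrete_factorised_lipschitz_general S θ hθ_sum ε hε hθ_lb x y
end

section
/- Let ω be the unique positive real solution of e^ω = 2ω + 1 (which exists, is unique, and satisfies ω ≈ 1.25643). For every c > 0, the function α ↦ 2α·(1 − e^{−cα})^{−2} on α > 0 attains its infimum at α* = ω/c, and the minimum value equals κ/c where κ = 2ω/(1 − e^{−ω})². -/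
/-! Since `exp` is strictly convex, the secant slope `(eˣ - 1) / x` is strictly increasing on
`(0, ∞)`. Hence `eˣ = 2x + 1` has at most one positive root `ω`, and for `x > 0` the sign of
`eˣ - (2x + 1)` is that of `x - ω`; the root exists, and lies in `(1.25, 1.26)`, because
`e^1.25 < 3.5` and `3.52 < e^1.26`. The derivative of `t ↦ 2t / (1 - e^{-t})²` is
`2e^{-t} (eᵗ - 2t - 1) / (1 - e^{-t})³`, so this function decreases on `(0, ω]` and increases on
`[ω, ∞)`. The objective in `α` is this function at `t = cα`, divided by `c`. -/

open Real Set

lemma strictMonoOn_exp_sub_one_div : StrictMonoOn (fun x => (exp x - 1) / x) (Ioi 0) := by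
  intro x hx y hy hxy
  simpa using strictConvexOn_exp.secant_strict_mono (mem_univ 0) (mem_univ x) (mem_univ y)
    (ne_of_gt hx) (ne_of_gt hy) hxy

lemma exp_sub_one_div_eq_of_exp_eq {a x : ℝ} (hx : x ≠ 0) (hroot : exp x = a * x + 1) :
    (exp x - 1) / x = a := by
  rw [hroot]; field_simp; ring

lemma eq_of_exp_eq_mul_add_one {a x y : ℝ} (hx : 0 < x) (hy : 0 < y)
    (hxroot : exp x = a * x + 1) (hyroot : exp y = a * y + 1) : x = y :=
  strictMonoOn_exp_sub_one_div.injOn hx hy <| by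
    simp only [exp_sub_one_div_eq_of_exp_eq hx.ne' hxroot,
      exp_sub_one_div_eq_of_exp_eq hy.ne' hyroot]

lemma exp_lt_mul_add_one_iff {a ω x : ℝ} (hω : 0 < ω) (hroot : exp ω = a * ω + 1)
    (hx : 0 < x) :
    exp x < a * x + 1 ↔ x < ω := by
  rw [← strictMonoOn_exp_sub_one_div.lt_iff_lt hx hω, exp_sub_one_div_eq_of_exp_eq hω.ne' hroot,
    div_lt_iff₀ hx, sub_lt_iff_lt_add]

lemma mul_add_one_lt_exp_iff {a ω x : ℝ} (hω : 0 < ω) (hroot : exp ω = a * ω + 1)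
    (hx : 0 < x) :
    a * x + 1 < exp x ↔ ω < x := by
  rw [← strictMonoOn_exp_sub_one_div.lt_iff_lt hω hx, exp_sub_one_div_eq_of_exp_eq hω.ne' hroot,
    lt_div_iff₀ hx, lt_sub_iff_add_lt]

lemma exp_one_point_two_five_lt : exp 1.25 < 3.5 := by
  have hsplit : exp 1.25 = exp 1 * exp 0.25 := by rw [← exp_add]; norm_num
  have hquarter : exp 0.25 ≤ 1.2841 := by
    refine (exp_bound' (x := 0.25) (by norm_num) (by norm_num) (n := 4) (by norm_num)).trans ?_
    norm_num [Finset.sum_range_succ, Nat.factorial]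
  rw [hsplit]
  nlinarith [exp_one_lt_d9, exp_pos 0.25]

lemma lt_exp_one_point_two_six : 3.52 < exp 1.26 := by
  have hsplit : exp 1.26 = exp 1 * exp 0.26 := by rw [← exp_add]; norm_num
  have hlow : 1.2967 ≤ exp 0.26 := by
    refine le_trans ?_ (sum_le_exp_of_nonneg (x := 0.26) (by norm_num) 4)
    norm_num [Finset.sum_range_succ, Nat.factorial]
  rw [hsplit]
  nlinarith [exp_one_gt_d9, exp_pos 1]

lemma exists_exp_eq_two_mul_add_one : ∃ ω ∈ Ioo 1.25 1.26, exp ω = 2 * ω + 1 := by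
  have hcont : ContinuousOn (fun x => exp x - (2 * x + 1)) (Icc 1.25 1.26) := by fun_prop
  have hsign : (0 : ℝ) ∈ Ioo (exp 1.25 - (2 * 1.25 + 1)) (exp 1.26 - (2 * 1.26 + 1)) := by
    constructor <;> norm_num <;> linarith [exp_one_point_two_five_lt, lt_exp_one_point_two_six]
  obtain ⟨ω, hmem, hzero⟩ := intermediate_value_Ioo (by norm_num) hcont hsign
  exact ⟨ω, hmem, sub_eq_zero.1 hzero⟩

lemma mem_Ioo_of_exp_eq_two_mul_add_one {ω : ℝ} (hω : 0 < ω) (hroot : exp ω = 2 * ω + 1) :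
    ω ∈ Ioo 1.25 1.26 :=
  ⟨(exp_lt_mul_add_one_iff hω hroot (by norm_num)).1 (by linarith [exp_one_point_two_five_lt]),
    (mul_add_one_lt_exp_iff hω hroot (by norm_num)).1 (by linarith [lt_exp_one_point_two_six])⟩

noncomputable def kappaObjective (t : ℝ) : ℝ := 2 * t / (1 - exp (-t)) ^ 2

lemma one_sub_exp_neg_ne_zero {t : ℝ} (ht : t ≠ 0) : 1 - exp (-t) ≠ 0 := by
  rw [sub_ne_zero, ne_comm, Ne, exp_eq_one_iff, neg_eq_zero]; exact ht

lemma one_sub_exp_neg_pos {t : ℝ} (ht : 0 < t) : 0 < 1 - exp (-t) := by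
  rw [sub_pos, exp_lt_one_iff]; linarith

lemma hasDerivAt_kappaObjective {t : ℝ} (ht : t ≠ 0) :
    HasDerivAt kappaObjective
      (2 * exp (-t) * (exp t - (2 * t + 1)) / (1 - exp (-t)) ^ 3) t := by
  have hden := one_sub_exp_neg_ne_zero ht
  have hsq : HasDerivAt (fun s => (1 - exp (-s)) ^ 2) (2 * (1 - exp (-t)) * exp (-t)) t :=
    (((hasDerivAt_neg t).exp.const_sub 1).fun_pow 2).congr_deriv (by push_cast; ring)
  have hnum : HasDerivAt (fun s => 2 * s) 2 t := by simpa using (hasDerivAt_id t).const_mul 2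
  refine (hnum.div hsq (pow_ne_zero 2 hden)).congr_deriv ?_
  have hinv : exp (-t) * exp t = 1 := by rw [← exp_add]; simp
  field_simp
  linear_combination -hinv

lemma continuousOn_kappaObjective : ContinuousOn kappaObjective (Ioi 0) := fun _ ht =>
  (hasDerivAt_kappaObjective (ne_of_gt ht)).continuousAt.continuousWithinAt

lemma strictAntiOn_kappaObjective {ω : ℝ} (hω : 0 < ω) (hroot : exp ω = 2 * ω + 1) :
    StrictAntiOn kappaObjective (Ioc 0 ω) := by
  refine strictAntiOn_of_deriv_neg (convex_Ioc 0 ω)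
    (continuousOn_kappaObjective.mono Ioc_subset_Ioi_self) fun t ht => ?_
  rw [interior_Ioc] at ht
  rw [(hasDerivAt_kappaObjective ht.1.ne').deriv]
  have hsign : exp t - (2 * t + 1) < 0 :=
    sub_neg.2 ((exp_lt_mul_add_one_iff hω hroot ht.1).2 ht.2)
  exact div_neg_of_neg_of_pos (mul_neg_of_pos_of_neg (by positivity) hsign)
    (pow_pos (one_sub_exp_neg_pos ht.1) 3)

lemma strictMonoOn_kappaObjective {ω : ℝ} (hω : 0 < ω) (hroot : exp ω = 2 * ω + 1) :
    StrictMonoOn kappaObjective (Ici ω) := by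
  refine strictMonoOn_of_deriv_pos (convex_Ici ω)
    (continuousOn_kappaObjective.mono (Ici_subset_Ioi.2 hω)) fun t ht => ?_
  rw [interior_Ici] at ht
  have ht0 : 0 < t := hω.trans ht
  rw [(hasDerivAt_kappaObjective ht0.ne').deriv]
  have hsign : 0 < exp t - (2 * t + 1) :=
    sub_pos.2 ((mul_add_one_lt_exp_iff hω hroot ht0).2 ht)
  exact div_pos (mul_pos (by positivity) hsign) (pow_pos (one_sub_exp_neg_pos ht0) 3)

lemma isMinOn_kappaObjective {ω : ℝ} (hω : 0 < ω) (hroot : exp ω = 2 * ω + 1) :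
    IsMinOn kappaObjective (Ioi 0) ω := by
  intro t ht
  rcases le_total t ω with htω | hωt
  · exact (strictAntiOn_kappaObjective hω hroot).antitoneOn ⟨ht, htω⟩ ⟨hω, le_rfl⟩ htω
  · exact (strictMonoOn_kappaObjective hω hroot).monotoneOn self_mem_Ici hωt hωt

lemma kappaObjective_mul_div {c : ℝ} (hc : c ≠ 0) (α : ℝ) :
    kappaObjective (c * α) / c = 2 * α / (1 - exp (-(c * α))) ^ 2 := by
  rw [kappaObjective, div_right_comm, mul_left_comm, mul_div_cancel_left₀ _ hc]

/-- there is a unique positive real `ω` with `e^ω = 2ω + 1` (and it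
satisfies `ω ≈ 1.25643`, in particular `1.25 < ω < 1.26`); for every `c > 0`, the
function `α ↦ 2α·(1 − e^{−cα})^{−2}` on `α > 0` attains its infimum (is minimised) at
`α* = ω/c`, and the minimum value equals `κ/c` where `κ = 2ω/(1 − e^{−ω})²`. -/
theorem kappa_optimisation :
    (∃! ω : ℝ, 0 < ω ∧ Real.exp ω = 2 * ω + 1) ∧
    (∀ ω : ℝ, 0 < ω → Real.exp ω = 2 * ω + 1 →
      1.25 < ω ∧ ω < 1.26 ∧
      ∀ c : ℝ, 0 < c →
        IsLeast ((fun α : ℝ => 2 * α / (1 - Real.exp (-(c * α))) ^ 2) '' Set.Ioi 0)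
          ((2 * ω / (1 - Real.exp (-ω)) ^ 2) / c) ∧
        2 * (ω / c) / (1 - Real.exp (-(c * (ω / c)))) ^ 2
          = (2 * ω / (1 - Real.exp (-ω)) ^ 2) / c) := by
  obtain ⟨ω₀, hω₀, hroot₀⟩ := exists_exp_eq_two_mul_add_one
  have hω₀pos : 0 < ω₀ := by linarith [hω₀.1]
  refine ⟨⟨ω₀, ⟨hω₀pos, hroot₀⟩, fun y ⟨hy, hyroot⟩ =>
    eq_of_exp_eq_mul_add_one hy hω₀pos hyroot hroot₀⟩, fun ω hω hroot => ?_⟩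
  obtain ⟨hlow, hhigh⟩ := mem_Ioo_of_exp_eq_two_mul_add_one hω hroot
  refine ⟨hlow, hhigh, fun c hc => ?_⟩
  have hvalue : 2 * (ω / c) / (1 - exp (-(c * (ω / c)))) ^ 2 = kappaObjective ω / c := by
    rw [← kappaObjective_mul_div hc.ne', mul_div_cancel₀ _ hc.ne']
  refine ⟨⟨⟨ω / c, div_pos hω hc, hvalue⟩, ?_⟩, hvalue⟩
  rintro _ ⟨α, hα, rfl⟩
  dsimp only
  rw [← kappaObjective_mul_div hc.ne']
  exact div_le_div_of_nonneg_right (isMinOn_kappaObjective hω hroot (mul_pos hc hα)) hc.le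
end
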